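/- For any subset I of [n-1], the sign-twisted generating function over the parabolic quotient S_n^I of the symmetric group satisfies Σ_{σ ∈ S_n^I} (-1)^{inv(σ)} x^{oinv(σ)} = Σ_{σ ∈ S_n^I, σ chessboard} (-1)^{inv(σ)} x^{oinv(σ)}, where a permutation σ ∈ S_n is chessboard if σ(i) ≢ σ(i+1) (mod 2) for all i ∈ [n-1]. -/

import Mathlib

open Polynomial Finset

namespace OddLength

/-- A signed permutation of degree `n`, encoded as an underlying permutation of
`Fin n` together with a sign vector. -/
abbrev SP (n : ℕ) := Equiv.Perm (Fin n) × (Fin n → Bool)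

/-- The one-line value `σ(i)` of a signed permutation, for `i ∈ [1,n]` (and `0` elsewhere). -/
def sval {n : ℕ} (σ : SP n) (i : ℕ) : ℤ :=
  if h : 1 ≤ i ∧ i ≤ n then
    (if σ.2 ⟨i - 1, by omega⟩ then (-1 : ℤ) else 1) *
      (((σ.1 ⟨i - 1, by omega⟩ : Fin n) : ℕ) + 1 : ℤ)
  else 0

/-- A signed permutation is *even* (lies in the Weyl group `D_n`) if it has an even
number of negative entries in its one-line notation. -/
def IsEvenSP {n : ℕ} (σ : SP n) : Prop :=
  Even ((Finset.univ.filter (fun i => σ.2 i = true)).card)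

instance {n : ℕ} (σ : SP n) : Decidable (IsEvenSP σ) := by
  unfold IsEvenSP; infer_instance

/-- Pairs `1 ≤ i < j ≤ n` of positions. -/
def pairs (n : ℕ) : Finset (ℕ × ℕ) :=
  (Finset.Icc 1 n ×ˢ Finset.Icc 1 n).filter (fun p => p.1 < p.2)

/-- Number of inversions. -/
def invSP {n : ℕ} (σ : SP n) : ℕ :=
  ((pairs n).filter (fun p => sval σ p.2 < sval σ p.1)).card

/-- Number of negative sum pairs. -/
def nspSP {n : ℕ} (σ : SP n) : ℕ :=
  ((pairs n).filter (fun p => sval σ p.1 + sval σ p.2 < 0)).card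

/-- Number of odd inversions (positions of different parity). -/
def oinvSP {n : ℕ} (σ : SP n) : ℕ :=
  ((pairs n).filter (fun p => sval σ p.2 < sval σ p.1 ∧ p.1 % 2 ≠ p.2 % 2)).card

/-- Number of odd negative sum pairs (positions of different parity). -/
def onspSP {n : ℕ} (σ : SP n) : ℕ :=
  ((pairs n).filter (fun p => sval σ p.1 + sval σ p.2 < 0 ∧ p.1 % 2 ≠ p.2 % 2)).card

/-- The type-`D` Coxeter length `ℓ(σ) = inv(σ) + nsp(σ)`. -/
def ellD {n : ℕ} (σ : SP n) : ℕ := invSP σ + nspSP σ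

/-- The type-`D` odd length `L(σ) = oinv(σ) + onsp(σ)`. -/
def LD {n : ℕ} (σ : SP n) : ℕ := oinvSP σ + onspSP σ

/-- The descent value at position `i`, with the type-`D` convention `σ(0) := -σ(2)`. -/
def dval {n : ℕ} (σ : SP n) (i : ℕ) : ℤ := if i = 0 then -sval σ 2 else sval σ i

/-- Membership in the parabolic quotient `D_n^I`: `σ(i) < σ(i+1)` for all `i ∈ I`,
with the convention `σ(0) = -σ(2)`. -/
def InQuot {n : ℕ} (σ : SP n) (I : Finset ℕ) : Prop :=
  ∀ i ∈ I, dval σ i < dval σ (i + 1)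

instance {n : ℕ} (σ : SP n) (I : Finset ℕ) : Decidable (InQuot σ I) := by
  unfold InQuot; infer_instance

/-- `σ` is ascending: `σ(1) < σ(2) < ⋯ < σ(n)`. -/
def Ascending {n : ℕ} (σ : SP n) : Prop :=
  ∀ i, 1 ≤ i → i < n → sval σ i < sval σ (i + 1)

/-- `σ` is a chessboard element: `σ(i) ≢ σ(i+1) (mod 2)` for all `i ∈ [n-1]`. -/
def Chessboard {n : ℕ} (σ : SP n) : Prop :=
  ∀ i ∈ Finset.Icc 1 (n - 1), sval σ i % 2 ≠ sval σ (i + 1) % 2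

instance {n : ℕ} (σ : SP n) : Decidable (Chessboard σ) := by
  unfold Chessboard; infer_instance

/-- The sign-twisted generating function of the odd length over `D_n^I`. -/
noncomputable def genD (n : ℕ) (I : Finset ℕ) : Polynomial ℤ :=
  ∑ σ ∈ Finset.univ.filter (fun σ : SP n => IsEvenSP σ ∧ InQuot σ I),
    (-1 : Polynomial ℤ) ^ ellD σ * X ^ LD σ


/-- `σ` encodes an ordinary permutation of `[n]`: all its entries are positive. -/
def PosSP {n : ℕ} (σ : SP n) : Prop := ∀ i ∈ Finset.Icc 1 n, 0 < sval σ i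

instance {n : ℕ} (σ : SP n) : Decidable (PosSP σ) := by
  unfold PosSP; infer_instance

/-!
Swapping two consecutive values `v, v + 1` of a permutation changes `inv` by exactly one. If `v`
and `v + 1` sit at positions of the same parity, the swap changes no comparison between positions
of different parity, so it preserves `oinv` and every descent condition `σ(i) < σ(i + 1)`, hence
membership in `S_n^I`. A permutation is chessboard iff no such `v` exists (both say that
`σ(i) + i` has constant parity), so swapping the least such `v` is a sign-reversing,
`oinv`-preserving involution on the non-chessboard elements of `S_n^I`, whose terms therefore
cancel.
-/

lemma neg_one_pow_add_neg_one_pow_of_odd {R : Type*} [Ring R] {a b : ℕ} (h : Odd (a + b)) :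
    (-1 : R) ^ a + (-1) ^ b = 0 := by
  rw [neg_one_pow_eq_pow_mod_two, neg_one_pow_eq_pow_mod_two (n := b)]
  obtain ⟨k, hk⟩ := h
  rcases Nat.mod_two_eq_zero_or_one a with ha | ha <;>
    rw [ha, show b % 2 = 1 - a % 2 by omega, ha] <;> norm_num

lemma odd_card_filter_add_card_filter {α : Type*} {s : Finset α} {p q : α → Prop}
    [DecidablePred p] [DecidablePred q] {e : α} (he : e ∈ s)
    (hpq : ∀ x ∈ s, x ≠ e → (p x ↔ q x)) (hpqe : p e ↔ ¬q e) :
    Odd (#(s.filter p) + #(s.filter q)) := by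
  classical
  rw [card_filter, card_filter, ← sum_add_distrib, ← add_sum_erase _ _ he]
  refine Odd.add_even ?_ (even_sum _ fun x hx => ?_)
  · by_cases hq : q e <;> simp [hq, hpqe]
  · simp only [hpq x (mem_of_mem_erase hx) (ne_of_mem_erase hx)]
    exact Even.add_self _

lemma swap_lt_swap_iff {c u v : ℤ} (h : ¬((u = c ∨ u = c + 1) ∧ (v = c ∨ v = c + 1))) :
    Equiv.swap c (c + 1) u < Equiv.swap c (c + 1) v ↔ u < v := by
  simp only [Equiv.swap_apply_def]
  split_ifs <;> omega

lemma swap_lt_swap_iff_not_lt {c u v : ℤ} (hu : u = c ∨ u = c + 1) (hv : v = c ∨ v = c + 1)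
    (huv : u ≠ v) : Equiv.swap c (c + 1) u < Equiv.swap c (c + 1) v ↔ ¬u < v := by
  simp only [Equiv.swap_apply_def]
  split_ifs <;> omega

lemma alternating_parity_iff {f : ℕ → ℤ} {n : ℕ} :
    (∀ i ∈ Icc 1 (n - 1), f i % 2 ≠ f (i + 1) % 2) ↔
      ∀ i ∈ Icc 1 n, ∀ j ∈ Icc 1 n, (f i + i) % 2 = (f j + j) % 2 := by
  constructor
  · intro h
    have key : ∀ i ∈ Icc 1 n, (f i + i) % 2 = (f 1 + 1) % 2 := by
      intro i hi
      obtain ⟨hi1, hin⟩ := mem_Icc.1 hi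
      induction i, hi1 using Nat.le_induction with
      | base => rfl
      | succ i hi1 ih =>
        have := h i (mem_Icc.2 ⟨hi1, by omega⟩)
        have := ih (mem_Icc.2 ⟨hi1, by omega⟩) (by omega)
        push_cast
        omega
    intro i hi j hj
    rw [key i hi, key j hj]
  · intro h i hi
    obtain ⟨hi1, hin⟩ := mem_Icc.1 hi
    have := h i (mem_Icc.2 ⟨hi1, by omega⟩) (i + 1) (mem_Icc.2 ⟨by omega, by omega⟩)
    push_cast at this
    omega

section

variable {n : ℕ} {σ : SP n} {v : ℕ}

lemma sval_of_notMem {i : ℕ} (hi : i ∉ Icc 1 n) : sval σ i = 0 := by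
  rw [sval, dif_neg (by simpa using hi)]

lemma posSP_iff_snd_eq_false : PosSP σ ↔ ∀ x, σ.2 x = false := by
  constructor
  · intro hσ x
    have h := hσ (x + 1) (mem_Icc.2 ⟨by omega, x.isLt⟩)
    rw [sval, dif_pos ⟨by omega, x.isLt⟩] at h
    simp only [Nat.add_sub_cancel, Fin.eta] at h
    by_contra hx
    simp only [Bool.not_eq_false] at hx
    simp only [hx, if_true] at h
    omega
  · intro hσ i hi
    rw [sval, dif_pos (mem_Icc.1 hi), hσ]
    simp only [Bool.false_eq_true, if_false, one_mul]
    positivity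

lemma sval_add_one (hσ : PosSP σ) (x : Fin n) : sval σ (x + 1) = (σ.1 x : ℕ) + 1 := by
  rw [sval, dif_pos ⟨by omega, x.isLt⟩]
  simp [posSP_iff_snd_eq_false.1 hσ]

/-- The position `σ⁻¹(v)`, or `0` if `v ∉ [1, n]`. -/
def posOf (σ : SP n) (v : ℕ) : ℕ :=
  if h : 1 ≤ v ∧ v ≤ n then (σ.1.symm ⟨v - 1, by omega⟩ : ℕ) + 1 else 0

lemma posOf_mem (hv : v ∈ Icc 1 n) : posOf σ v ∈ Icc 1 n := by
  rw [posOf, dif_pos (mem_Icc.1 hv), mem_Icc]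
  exact ⟨by omega, Fin.isLt _⟩

lemma sval_posOf (hσ : PosSP σ) (hv : v ∈ Icc 1 n) : sval σ (posOf σ v) = v := by
  rw [posOf, dif_pos (mem_Icc.1 hv), sval_add_one hσ, Equiv.apply_symm_apply]
  have := (mem_Icc.1 hv).1
  push_cast
  omega

lemma posOf_eq_of_sval_eq (hσ : PosSP σ) {i : ℕ} (hi : i ∈ Icc 1 n) (h : sval σ i = v) :
    posOf σ v = i := by
  obtain ⟨x, rfl⟩ : ∃ x : Fin n, (x : ℕ) + 1 = i := ⟨⟨i - 1, by grind⟩, by grind⟩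
  rw [sval_add_one hσ] at h
  have hv : (σ.1 x : ℕ) + 1 = v := by omega
  rw [posOf, dif_pos ⟨by omega, by omega⟩]
  simp [← hv]

def badValues (σ : SP n) : Finset ℕ :=
  (Icc 1 (n - 1)).filter fun v => posOf σ v % 2 = posOf σ (v + 1) % 2

lemma chessboard_iff_badValues_eq_empty (hσ : PosSP σ) : Chessboard σ ↔ badValues σ = ∅ := by
  have hbad : badValues σ = ∅ ↔
      ∀ v ∈ Icc 1 (n - 1), (posOf σ v : ℤ) % 2 ≠ (posOf σ (v + 1) : ℤ) % 2 := by
    rw [badValues, filter_eq_empty_iff]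
    exact forall₂_congr fun v _ => by omega
  rw [Chessboard, hbad, alternating_parity_iff, alternating_parity_iff (f := fun v => _)]
  constructor
  · intro h v hv w hw
    have := h _ (posOf_mem (σ := σ) hv) _ (posOf_mem (σ := σ) hw)
    rw [sval_posOf hσ hv, sval_posOf hσ hw] at this
    omega
  · intro h i hi j hj
    obtain ⟨x, rfl⟩ : ∃ x : Fin n, (x : ℕ) + 1 = i := ⟨⟨i - 1, by grind⟩, by grind⟩
    obtain ⟨y, rfl⟩ : ∃ y : Fin n, (y : ℕ) + 1 = j := ⟨⟨j - 1, by grind⟩, by grind⟩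
    have hmem : ∀ z : Fin n, (σ.1 z : ℕ) + 1 ∈ Icc 1 n := fun z =>
      mem_Icc.2 ⟨by omega, (σ.1 z).isLt⟩
    have := h _ (hmem x) _ (hmem y)
    rw [posOf_eq_of_sval_eq hσ hi (by rw [sval_add_one hσ]; push_cast; rfl),
      posOf_eq_of_sval_eq hσ hj (by rw [sval_add_one hσ]; push_cast; rfl)] at this
    rw [sval_add_one hσ, sval_add_one hσ]
    push_cast at this ⊢
    omega

/-- Left multiplication by the simple transposition `s_v`; the identity unless `v ∈ [1, n - 1]`. -/
def swapValues (v : ℕ) (σ : SP n) : SP n :=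
  if h : 1 ≤ v ∧ v < n then (Equiv.swap ⟨v - 1, by omega⟩ ⟨v, h.2⟩ * σ.1, σ.2) else σ

lemma swapValues_swapValues : swapValues v (swapValues v σ) = σ := by
  unfold swapValues
  split_ifs <;> simp [Equiv.swap_mul_self_mul]

lemma swapValues_ne (hv : v ∈ Icc 1 (n - 1)) : swapValues v σ ≠ σ := by
  rw [swapValues, dif_pos (by grind), Ne, Prod.ext_iff, Equiv.swap_mul_eq_iff, Fin.ext_iff]
  grind

lemma posSP_swapValues (hσ : PosSP σ) : PosSP (swapValues v σ) := by
  rw [posSP_iff_snd_eq_false] at hσ ⊢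
  unfold swapValues
  split_ifs <;> exact hσ

lemma sval_swapValues (hσ : PosSP σ) (hv : v ∈ Icc 1 (n - 1)) (i : ℕ) :
    sval (swapValues v σ) i = Equiv.swap (v : ℤ) (v + 1) (sval σ i) := by
  obtain ⟨hv1, hvn⟩ := mem_Icc.1 hv
  by_cases hi : i ∈ Icc 1 n
  · obtain ⟨x, rfl⟩ : ∃ x : Fin n, (x : ℕ) + 1 = i := ⟨⟨i - 1, by grind⟩, by grind⟩
    rw [sval_add_one (posSP_swapValues hσ), sval_add_one hσ, swapValues, dif_pos ⟨hv1, by omega⟩,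
      Equiv.Perm.mul_apply]
    simp only [Equiv.swap_apply_def, Fin.ext_iff]
    split_ifs <;> push_cast <;> omega
  · rw [sval_of_notMem hi, sval_of_notMem hi, Equiv.swap_apply_of_ne_of_ne] <;> omega

lemma mem_pairs {p : ℕ × ℕ} : p ∈ pairs n ↔ (p.1 ∈ Icc 1 n ∧ p.2 ∈ Icc 1 n) ∧ p.1 < p.2 := by
  rw [pairs, mem_filter, mem_product]

lemma sval_eq_or_eq_iff (hσ : PosSP σ) (hv : v ∈ Icc 1 (n - 1)) {i : ℕ} (hi : i ∈ Icc 1 n) :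
    (sval σ i = v ∨ sval σ i = v + 1) ↔ (i = posOf σ v ∨ i = posOf σ (v + 1)) := by
  have hv1 : v + 1 ∈ Icc 1 n := by grind
  constructor
  · rintro (h | h)
    · exact .inl (posOf_eq_of_sval_eq hσ hi h).symm
    · exact .inr (posOf_eq_of_sval_eq hσ hi (by push_cast; exact h)).symm
  · rintro (rfl | rfl)
    · exact .inl (sval_posOf hσ (by grind))
    · exact .inr (by rw [sval_posOf hσ hv1]; push_cast; rfl)

lemma odd_invSP_swapValues_add (hσ : PosSP σ) (hv : v ∈ Icc 1 (n - 1)) :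
    Odd (invSP (swapValues v σ) + invSP σ) := by
  have hv0 : v ∈ Icc 1 n := by grind
  have hv1 : v + 1 ∈ Icc 1 n := by grind
  set P := posOf σ v
  set Q := posOf σ (v + 1)
  have hP : P ∈ Icc 1 n := posOf_mem hv0
  have hQ : Q ∈ Icc 1 n := posOf_mem hv1
  have hsP : sval σ P = v := sval_posOf hσ hv0
  have hsQ : sval σ Q = v + 1 := by rw [sval_posOf hσ hv1]; push_cast; rfl
  have hPQ : P ≠ Q := fun h => by rw [h, hsQ] at hsP; omega
  refine odd_card_filter_add_card_filter (e := (min P Q, max P Q)) ?_ (fun p hp hpe => ?_) ?_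
  · rw [mem_pairs]
    refine ⟨⟨?_, ?_⟩, by omega⟩ <;> grind
  · obtain ⟨⟨h1, h2⟩, h12⟩ := mem_pairs.1 hp
    rw [sval_swapValues hσ hv, sval_swapValues hσ hv]
    refine swap_lt_swap_iff fun ⟨h2', h1'⟩ => hpe ?_
    rw [sval_eq_or_eq_iff hσ hv h1] at h1'
    rw [sval_eq_or_eq_iff hσ hv h2] at h2'
    ext <;> simp only <;> omega
  · rw [sval_swapValues hσ hv, sval_swapValues hσ hv]
    rcases lt_or_gt_of_ne hPQ with h | h
    · rw [min_eq_left h.le, max_eq_right h.le, hsP, hsQ]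
      exact swap_lt_swap_iff_not_lt (.inr rfl) (.inl rfl) (by omega)
    · rw [min_eq_right h.le, max_eq_left h.le, hsP, hsQ]
      exact swap_lt_swap_iff_not_lt (.inl rfl) (.inr rfl) (by omega)

lemma sval_swapValues_lt_iff (hσ : PosSP σ) (hv : v ∈ badValues σ) {i j : ℕ} (hi : i ∈ Icc 1 n)
    (hj : j ∈ Icc 1 n) (hij : i % 2 ≠ j % 2) :
    sval (swapValues v σ) i < sval (swapValues v σ) j ↔ sval σ i < sval σ j := by
  obtain ⟨hv', hpar⟩ := mem_filter.1 hv
  rw [sval_swapValues hσ hv', sval_swapValues hσ hv']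
  refine swap_lt_swap_iff fun ⟨hi', hj'⟩ => ?_
  rw [sval_eq_or_eq_iff hσ hv' hi] at hi'
  rw [sval_eq_or_eq_iff hσ hv' hj] at hj'
  omega

lemma oinvSP_swapValues (hσ : PosSP σ) (hv : v ∈ badValues σ) :
    oinvSP (swapValues v σ) = oinvSP σ := by
  unfold oinvSP
  congr 1
  refine filter_congr fun p hp => and_congr_left fun hpar => ?_
  obtain ⟨⟨h1, h2⟩, -⟩ := mem_pairs.1 hp
  exact sval_swapValues_lt_iff hσ hv h2 h1 (Ne.symm hpar)

lemma inQuot_swapValues (hσ : PosSP σ) (hv : v ∈ badValues σ) {I : Finset ℕ}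
    (hI : I ⊆ Icc 1 (n - 1)) (hQ : InQuot σ I) : InQuot (swapValues v σ) I := by
  intro i hi
  obtain ⟨hi1, hin⟩ := mem_Icc.1 (hI hi)
  have hd := hQ i hi
  simp only [dval, if_neg (by omega : i ≠ 0), if_neg (Nat.succ_ne_zero i)] at hd ⊢
  exact (sval_swapValues_lt_iff hσ hv (mem_Icc.2 ⟨hi1, by omega⟩)
    (mem_Icc.2 ⟨by omega, by omega⟩) (by omega)).2 hd

lemma posOf_swapValues_mod_two (hσ : PosSP σ) (hv : v ∈ badValues σ) {w : ℕ}
    (hw : w ∈ Icc 1 n) : posOf (swapValues v σ) w % 2 = posOf σ w % 2 := by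
  obtain ⟨hv', hpar⟩ := mem_filter.1 hv
  have hσ' : PosSP (swapValues v σ) := posSP_swapValues hσ
  have hv0 : v ∈ Icc 1 n := by grind
  have hv1 : v + 1 ∈ Icc 1 n := by grind
  rcases eq_or_ne w v with rfl | hwv
  · rw [posOf_eq_of_sval_eq hσ' (posOf_mem hv1) (by
      rw [sval_swapValues hσ hv', sval_posOf hσ hv1]; push_cast; exact Equiv.swap_apply_right _ _)]
    exact hpar.symm
  rcases eq_or_ne w (v + 1) with rfl | hwv1
  · rw [posOf_eq_of_sval_eq hσ' (posOf_mem hv0) (by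
      rw [sval_swapValues hσ hv', sval_posOf hσ hv0]; push_cast; exact Equiv.swap_apply_left _ _)]
    exact hpar
  · rw [posOf_eq_of_sval_eq hσ' (posOf_mem hw) (by
      rw [sval_swapValues hσ hv', sval_posOf hσ hw]
      exact Equiv.swap_apply_of_ne_of_ne (by omega) (by omega))]

lemma badValues_swapValues (hσ : PosSP σ) (hv : v ∈ badValues σ) :
    badValues (swapValues v σ) = badValues σ := by
  refine filter_congr fun w hw => ?_
  obtain ⟨hw1, hwn⟩ := mem_Icc.1 hw
  rw [posOf_swapValues_mod_two hσ hv (mem_Icc.2 ⟨hw1, by omega⟩),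
    posOf_swapValues_mod_two hσ hv (mem_Icc.2 ⟨by omega, by omega⟩)]

/-- Fixes `σ` when `badValues σ = ∅`, as then `sInf` returns `0`. -/
noncomputable def chessInvolution (σ : SP n) : SP n :=
  swapValues (sInf (badValues σ : Set ℕ)) σ

lemma sInf_mem_badValues (hσ : PosSP σ) (hc : ¬Chessboard σ) :
    sInf (badValues σ : Set ℕ) ∈ badValues σ :=
  Nat.sInf_mem (coe_nonempty.2 (nonempty_iff_ne_empty.2
    (mt (chessboard_iff_badValues_eq_empty hσ).2 hc)))

lemma chessInvolution_chessInvolution (hσ : PosSP σ) (hc : ¬Chessboard σ) :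
    chessInvolution (chessInvolution σ) = σ := by
  rw [chessInvolution, chessInvolution, badValues_swapValues hσ (sInf_mem_badValues hσ hc),
    swapValues_swapValues]

lemma sum_filter_not_chessboard_eq_zero {I : Finset ℕ} (hI : I ⊆ Icc 1 (n - 1)) :
    ∑ σ ∈ univ.filter (fun σ : SP n => (PosSP σ ∧ InQuot σ I) ∧ ¬Chessboard σ),
      (-1 : ℤ[X]) ^ invSP σ * X ^ oinvSP σ = 0 := by
  refine sum_involution (fun σ _ => chessInvolution σ) (fun σ hσ => ?_) (fun σ hσ _ => ?_)
    (fun σ hσ => ?_) (fun σ hσ => ?_) <;>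
  obtain ⟨⟨hpos, hQ⟩, hc⟩ := (mem_filter.1 hσ).2 <;>
  have hv := sInf_mem_badValues hpos hc
  · rw [chessInvolution, oinvSP_swapValues hpos hv, ← add_mul, add_comm,
      neg_one_pow_add_neg_one_pow_of_odd (odd_invSP_swapValues_add hpos (mem_filter.1 hv).1),
      zero_mul]
  · exact swapValues_ne (mem_filter.1 hv).1
  · rw [chessInvolution]
    refine mem_filter.2 ⟨mem_univ _, ⟨posSP_swapValues hpos, inQuot_swapValues hpos hv hI hQ⟩, ?_⟩
    rw [chessboard_iff_badValues_eq_empty (posSP_swapValues hpos), badValues_swapValues hpos hv,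
      ← chessboard_iff_badValues_eq_empty hpos]
    exact hc
  · exact chessInvolution_chessInvolution hpos hc

end

/-- Lemma 4.3: the type-`A` sign-twisted generating function over `S_n^I` is supported
on chessboard permutations. Elements of `S_n` are encoded as signed permutations all
of whose entries are positive. -/
theorem stmt11 (n : ℕ) (I : Finset ℕ) (hI : I ⊆ Finset.Icc 1 (n - 1)) :
    (∑ σ ∈ Finset.univ.filter
        (fun σ : SP n => PosSP σ ∧ InQuot σ I),
      (-1 : Polynomial ℤ) ^ invSP σ * X ^ oinvSP σ) =
    ∑ σ ∈ Finset.univ.filter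
        (fun σ : SP n => PosSP σ ∧ InQuot σ I ∧ Chessboard σ),
      (-1 : Polynomial ℤ) ^ invSP σ * X ^ oinvSP σ := by
  rw [← sum_filter_add_sum_filter_not _ Chessboard, filter_filter, filter_filter,
    sum_filter_not_chessboard_eq_zero hI, add_zero]
  simp only [and_assoc]

end OddLength
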